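/- arXiv:1712.01885 — 4 statements merged into one kernel-verified Lean document; each statement's English description precedes it below -/
import Mathlib

section
/- Suppose in addition that M is compact. Then for every point σ of M the set B(σ) is chain-stable: for every open set V of M with B(σ) ⊆ V there exists ε > 0 such that for every τ > 0, every (ε,τ)-trajectory connecting two points of B(σ) is contained in V; that is, whenever P, Q ∈ B(σ) and P₁,…,P_k, t₁,…,t_k witness that Q is (ε,τ)-chain-accessible from P, then Pᵢ ∈ V for every 1 ≤ i ≤ k. -/
/-!
A point on an `(η,τ)`-chain issuing from a point of `B(σ)` is `(ε + η)`-accessible from `σ`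
for every `ε > 0`, so a point approximated by such points for arbitrarily small `η` lies in
`B(σ)`. If arbitrarily fine chains between points of `B(σ)` left the open set `V`, the points
where they do so would accumulate, by compactness of `M \ V`, at a point of `B(σ)` outside `V`.
-/

open Filter Topology

variable {M : Type*} [MetricSpace M]

/-- `Q` is `(ε,τ)`-chain-accessible from `P`: there are points `P₁,…,P_{k+1}` and times
`t₁,…,t_{k+1}`, each `> τ`, with `dist P P₁ < ε`, `dist (φ tᵢ Pᵢ) P_{i+1} < ε` and
`dist (φ t_{k+1} P_{k+1}) Q < ε`. -/
def ChainAccessibleWithin (φ : ℝ → M → M) (ε τ : ℝ) (P Q : M) : Prop :=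
  ∃ (k : ℕ) (Ps : Fin (k + 1) → M) (ts : Fin (k + 1) → ℝ),
    (∀ i, τ < ts i) ∧
    dist P (Ps 0) < ε ∧
    (∀ i : Fin k, dist (φ (ts i.castSucc) (Ps i.castSucc)) (Ps i.succ) < ε) ∧
    dist (φ (ts (Fin.last k)) (Ps (Fin.last k))) Q < ε

/-- `Q` is chain-accessible from `P`. -/
def ChainAccessible (φ : ℝ → M → M) (P Q : M) : Prop :=
  ∀ ε > 0, ∃ τ > 0, ChainAccessibleWithin φ ε τ P Q

/-- `B(σ)`: the set of points chain-accessible from `σ`. -/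
def chainBasin (φ : ℝ → M → M) (σ : M) : Set M :=
  {P | ChainAccessible φ σ P}

section

variable {φ : ℝ → M → M}

namespace ChainAccessibleWithin

variable {ε τ : ℝ} {P Q : M}

theorem pos (h : ChainAccessibleWithin φ ε τ P Q) : 0 < ε := by
  obtain ⟨k, Ps, ts, -, hP, -⟩ := h
  exact dist_nonneg.trans_lt hP

theorem mono {ε' τ' : ℝ} (h : ChainAccessibleWithin φ ε τ P Q) (hε : ε ≤ ε') (hτ : τ' ≤ τ) :
    ChainAccessibleWithin φ ε' τ' P Q := by
  obtain ⟨k, Ps, ts, hts, hP, hsteps, hQ⟩ := h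
  exact ⟨k, Ps, ts, fun i => hτ.trans_lt (hts i), hP.trans_le hε,
    fun i => (hsteps i).trans_le hε, hQ.trans_le hε⟩

theorem of_dist_lt {Q' : M} {δ : ℝ} (h : ChainAccessibleWithin φ ε τ P Q) (hQQ' : dist Q Q' < δ) :
    ChainAccessibleWithin φ (ε + δ) τ P Q' := by
  obtain ⟨k, Ps, ts, hts, hP, hsteps, hQ⟩ := h
  have hδ : 0 < δ := dist_nonneg.trans_lt hQQ'
  refine ⟨k, Ps, ts, hts, by linarith, fun i => by linarith [hsteps i], ?_⟩
  linarith [dist_triangle (φ (ts (Fin.last k)) (Ps (Fin.last k))) Q Q']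

theorem snoc {R : M} {t : ℝ} (h : ChainAccessibleWithin φ ε τ P Q) (ht : τ < t)
    (hR : dist (φ t Q) R < ε) : ChainAccessibleWithin φ ε τ P R := by
  obtain ⟨k, Ps, ts, hts, hP, hsteps, hQ⟩ := h
  refine ⟨k + 1, Fin.snoc Ps Q, Fin.snoc ts t, ?_, ?_, ?_, ?_⟩
  · intro i
    induction i using Fin.lastCases with
    | last => simpa using ht
    | cast j => simpa using hts j
  · rw [← Fin.castSucc_zero, Fin.snoc_castSucc]
    exact hP
  · intro i
    induction i using Fin.lastCases with
    | last => rwa [Fin.succ_last, Fin.snoc_last, Fin.snoc_castSucc, Fin.snoc_castSucc]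
    | cast j =>
      rw [Fin.succ_castSucc, Fin.snoc_castSucc, Fin.snoc_castSucc, Fin.snoc_castSucc]
      exact hsteps j
  · simpa using hR

theorem extend_along_chain {η : ℝ} {k : ℕ} {Ps : Fin (k + 1) → M} {ts : Fin (k + 1) → ℝ}
    (h : ChainAccessibleWithin φ ε τ Q P) (hts : ∀ i, τ < ts i) (h0 : dist P (Ps 0) < η)
    (hsteps : ∀ i : Fin k, dist (φ (ts i.castSucc) (Ps i.castSucc)) (Ps i.succ) < η)
    (j : Fin (k + 1)) : ChainAccessibleWithin φ (ε + η) τ Q (Ps j) := by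
  induction j using Fin.induction with
  | zero => exact h.of_dist_lt h0
  | succ j ih => exact ih.snoc (hts _) (by linarith [hsteps j, h.pos])

end ChainAccessibleWithin

def chainVisited (φ : ℝ → M → M) (σ : M) (η : ℝ) : Set M :=
  {y | ∃ P ∈ chainBasin φ σ, ∃ τ > 0, ∃ (k : ℕ) (Ps : Fin (k + 1) → M) (ts : Fin (k + 1) → ℝ),
    (∀ i, τ < ts i) ∧ dist P (Ps 0) < η ∧
    (∀ i : Fin k, dist (φ (ts i.castSucc) (Ps i.castSucc)) (Ps i.succ) < η) ∧ ∃ j, Ps j = y}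

theorem chainVisited_mono {σ : M} {η η' : ℝ} (h : η ≤ η') :
    chainVisited φ σ η ⊆ chainVisited φ σ η' := by
  rintro y ⟨P, hP, τ, hτ, k, Ps, ts, hts, h0, hsteps, hy⟩
  exact ⟨P, hP, τ, hτ, k, Ps, ts, hts, h0.trans_le h, fun i => (hsteps i).trans_le h, hy⟩

theorem exists_chainAccessibleWithin_of_mem_chainVisited {σ y : M} {ε η : ℝ} (hε : 0 < ε)
    (hy : y ∈ chainVisited φ σ η) : ∃ τ > 0, ChainAccessibleWithin φ (ε + η) τ σ y := by
  obtain ⟨P, hP, τ, hτ, k, Ps, ts, hts, h0, hsteps, j, rfl⟩ := hy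
  obtain ⟨τP, hτP, hσP⟩ := hP ε hε
  exact ⟨min τP τ, lt_min hτP hτ, (hσP.mono le_rfl (min_le_left _ _)).extend_along_chain
    (fun i => (min_le_right _ _).trans_lt (hts i)) h0 hsteps j⟩

theorem iInter_closure_chainVisited_subset_chainBasin (σ : M) :
    ⋂ n : ℕ, closure (chainVisited φ σ (1 / (n + 1))) ⊆ chainBasin φ σ := by
  intro x hx δ hδ
  obtain ⟨n, hn⟩ := exists_nat_one_div_lt (show 0 < δ / 3 by positivity)
  obtain ⟨y, hy, hxy⟩ := Metric.mem_closure_iff.1 (Set.mem_iInter.1 hx n) (δ / 3) (by positivity)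
  obtain ⟨τ, hτ, hσy⟩ := exists_chainAccessibleWithin_of_mem_chainVisited
    (show 0 < δ / 3 by positivity) hy
  exact ⟨τ, hτ, (hσy.of_dist_lt (dist_comm x y ▸ hxy)).mono (by linarith) le_rfl⟩

end

theorem chainBasin_chainStable_general [CompactSpace M] (φ : ℝ → M → M)
    (σ : M) :
    ∀ V : Set M, IsOpen V → chainBasin φ σ ⊆ V →
      ∃ ε > 0, ∀ τ > 0, ∀ P ∈ chainBasin φ σ, ∀ Q ∈ chainBasin φ σ,
        ∀ (k : ℕ) (Ps : Fin (k + 1) → M) (ts : Fin (k + 1) → ℝ),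
          (∀ i, τ < ts i) →
          dist P (Ps 0) < ε →
          (∀ i : Fin k, dist (φ (ts i.castSucc) (Ps i.castSucc)) (Ps i.succ) < ε) →
          dist (φ (ts (Fin.last k)) (Ps (Fin.last k))) Q < ε →
          ∀ i, Ps i ∈ V := by
  intro V hV hBV
  by_contra! hescape
  set t : ℕ → Set M := fun n => closure (chainVisited φ σ (1 / (n + 1))) ∩ Vᶜ
  have ht_nonempty (n : ℕ) : (t n).Nonempty := by
    obtain ⟨τ, hτ, P, hP, -, -, k, Ps, ts, hts, h0, hsteps, -, j, hj⟩ :=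
      hescape (1 / (n + 1)) (by positivity)
    exact ⟨Ps j, subset_closure ⟨P, hP, τ, hτ, k, Ps, ts, hts, h0, hsteps, j, rfl⟩, hj⟩
  have ht_antitone (n : ℕ) : t (n + 1) ⊆ t n := by
    refine Set.inter_subset_inter_left _ (closure_mono (chainVisited_mono ?_))
    gcongr
    linarith
  obtain ⟨x, hx⟩ := IsCompact.nonempty_iInter_of_sequence_nonempty_isCompact_isClosed t
    ht_antitone ht_nonempty (isClosed_closure.inter hV.isClosed_compl).isCompact
    (fun n => isClosed_closure.inter hV.isClosed_compl)
  have hxB : x ∈ chainBasin φ σ := iInter_closure_chainVisited_subset_chainBasin σ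
    (Set.mem_iInter.2 fun n => (Set.mem_iInter.1 hx n).1)
  exact (Set.mem_iInter.1 hx 0).2 (hBV hxB)

/-- if `M` is compact then `B(σ)` is chain-stable. -/
theorem chainBasin_chainStable [CompactSpace M] (φ : ℝ → M → M)
    (hcont : Continuous fun p : ℝ × M => φ p.1 p.2)
    (hφ0 : ∀ x, φ 0 x = x)
    (hφadd : ∀ s t x, φ (s + t) x = φ s (φ t x))
    (σ : M) :
    ∀ V : Set M, IsOpen V → chainBasin φ σ ⊆ V →
      ∃ ε > 0, ∀ τ > 0, ∀ P ∈ chainBasin φ σ, ∀ Q ∈ chainBasin φ σ,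
        ∀ (k : ℕ) (Ps : Fin (k + 1) → M) (ts : Fin (k + 1) → ℝ),
          (∀ i, τ < ts i) →
          dist P (Ps 0) < ε →
          (∀ i : Fin k, dist (φ (ts i.castSucc) (Ps i.castSucc)) (Ps i.succ) < ε) →
          dist (φ (ts (Fin.last k)) (Ps (Fin.last k))) Q < ε →
          ∀ i, Ps i ∈ V :=
  chainBasin_chainStable_general φ σ
end

section
/- If a point P of M has a in its α-limit set (there is a sequence tₙ → +∞ with φ(−tₙ, P) → a) and b in its ω-limit set (there is a sequence sₙ → +∞ with φ(sₙ, P) → b), then b is chain-accessible from a. (This expresses that a heteroclinic trajectory from a to b makes b chain-accessible from a.) -/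
open Filter Topology

variable {M : Type*} [MetricSpace M]

theorem ChainAccessibleWithin.of_single_jump {φ : ℝ → M → M} {ε τ T : ℝ} {P Q x : M}
    (hx : dist P x < ε) (hT : τ < T) (hQ : dist (φ T x) Q < ε) :
    ChainAccessibleWithin φ ε τ P Q :=
  ⟨0, fun _ => x, fun _ => T, fun _ => hT, hx, finZeroElim, hQ⟩

/-- A point `φ (-t) P` close to `a`, flowed for time `s + t`, lands at `φ s P`, which is close
to `b`; the times `s` can be taken as large as needed, so one jump suffices. -/
theorem heteroclinic_chainAccessible_general (φ : ℝ → M → M)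
    (hφadd : ∀ s t x, φ (s + t) x = φ s (φ t x))
    (a b P : M)
    (t : ℕ → ℝ)
    (hta : Tendsto (fun n => φ (-(t n)) P) atTop (𝓝 a))
    (s : ℕ → ℝ) (hs : Tendsto s atTop atTop)
    (hsb : Tendsto (fun n => φ (s n) P) atTop (𝓝 b)) :
    ChainAccessible φ a b := by
  intro ε hε
  refine ⟨1, one_pos, ?_⟩
  obtain ⟨n, hn⟩ := (hta.eventually (Metric.ball_mem_nhds a hε)).exists
  obtain ⟨m, hm_large, hm⟩ := ((hs.eventually_gt_atTop (1 - t n)).and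
    (hsb.eventually (Metric.ball_mem_nhds b hε))).exists
  have hflow : φ (s m + t n) (φ (-(t n)) P) = φ (s m) P := by
    rw [← hφadd, add_neg_cancel_right]
  exact .of_single_jump (Metric.mem_ball'.mp hn) (by linarith : 1 < s m + t n)
    (hflow ▸ hm)

/-- a heteroclinic trajectory from `a` to `b` makes `b`
chain-accessible from `a`. -/
theorem heteroclinic_chainAccessible (φ : ℝ → M → M)
    (hcont : Continuous fun p : ℝ × M => φ p.1 p.2)
    (hφ0 : ∀ x, φ 0 x = x)
    (hφadd : ∀ s t x, φ (s + t) x = φ s (φ t x))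
    (a b P : M)
    (t : ℕ → ℝ) (ht : Tendsto t atTop atTop)
    (hta : Tendsto (fun n => φ (-(t n)) P) atTop (𝓝 a))
    (s : ℕ → ℝ) (hs : Tendsto s atTop atTop)
    (hsb : Tendsto (fun n => φ (s n) P) atTop (𝓝 b)) :
    ChainAccessible φ a b :=
  heteroclinic_chainAccessible_general φ hφadd a b P t hta s hs hsb
end

section
/- Fixed points of the first-return map: (i) if (x,y) ∈ ℝ × (0,1) satisfies F_λ(x,y) = (x + 2πm, y) for some integer m, then m is a positive integer, y = exp(−2πm/K), and λ·sin x = y − y^δ; (ii) conversely, for every positive integer ℓ, setting y_ℓ = exp(−2πℓ/K), there exists x ∈ ℝ with F_λ(x, y_ℓ) = (x + 2πℓ, y_ℓ) if and only if λ ≥ y_ℓ − y_ℓ^δ (and here 0 < y_ℓ − y_ℓ^δ). -/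
/-!
The first coordinate of the fixed-point equation says `K log y = -2πm`, so `y = exp (-2πm/K)`,
and `y < 1` forces `m > 0`. Then `x - K log y = x + 2πm`, so by periodicity the second coordinate
reduces to `λ sin x = y - y^δ`, which is solvable in `x` exactly when `y - y^δ ≤ λ`.
-/

open Real

noncomputable def firstReturn (K δ lam : ℝ) (p : ℝ × ℝ) : ℝ × ℝ :=
  (p.1 - K * log p.2, p.2 ^ δ + lam * sin (p.1 - K * log p.2))

theorem firstReturn_eq_iff {K δ lam : ℝ} (x y : ℝ) (m : ℤ) :
    firstReturn K δ lam (x, y) = (x + 2 * π * m, y) ↔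
      K * log y = -(2 * π * m) ∧ y ^ δ + lam * sin x = y := by
  have shift_iff : x - K * log y = x + 2 * π * m ↔ K * log y = -(2 * π * m) := by
    constructor <;> intro h <;> linarith
  simp only [firstReturn, Prod.mk.injEq, shift_iff]
  refine and_congr_right fun hlog => ?_
  rw [show x - K * log y = x + m * (2 * π) by linarith, sin_add_int_mul_two_pi]

theorem Real.sub_rpow_pos_of_lt_one {y δ : ℝ} (hy0 : 0 < y) (hy1 : y < 1) (hδ : 1 < δ) :
    0 < y - y ^ δ := by
  have := rpow_lt_rpow_of_exponent_gt hy0 hy1 hδ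
  rw [rpow_one] at this
  linarith

theorem Real.exists_mul_sin_eq_iff (a c : ℝ) : (∃ x, a * sin x = c) ↔ |c| ≤ |a| := by
  constructor
  · rintro ⟨x, rfl⟩
    rw [abs_mul]
    exact mul_le_of_le_one_right (abs_nonneg a) (abs_sin_le_one x)
  · intro hca
    rcases eq_or_ne a 0 with rfl | ha
    · exact ⟨0, by simpa [eq_comm] using hca⟩
    · have hquot : |c / a| ≤ 1 := by
        rw [abs_div]
        exact div_le_one_of_le₀ hca (abs_nonneg a)
      refine ⟨arcsin (c / a), ?_⟩
      rw [sin_arcsin (neg_le_of_abs_le hquot) (le_of_abs_le hquot)]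
      field_simp

/-- fixed points of the model first-return map. -/
theorem fixed_points_first_return (K δ lam : ℝ) (hK : 0 < K) (hδ : 1 < δ)
    (hlam : 0 < lam) :
    let F : ℝ × ℝ → ℝ × ℝ := fun p =>
      (p.1 - K * Real.log p.2, p.2 ^ δ + lam * Real.sin (p.1 - K * Real.log p.2))
    (∀ (x y : ℝ) (m : ℤ), 0 < y → y < 1 →
        F (x, y) = (x + 2 * Real.pi * m, y) →
        0 < m ∧ y = Real.exp (-(2 * Real.pi * m) / K) ∧
          lam * Real.sin x = y - y ^ δ) ∧
    (∀ ℓ : ℕ, 0 < ℓ →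
        let yl : ℝ := Real.exp (-(2 * Real.pi * ℓ) / K)
        0 < yl - yl ^ δ ∧
        ((∃ x : ℝ, F (x, yl) = (x + 2 * Real.pi * ℓ, yl)) ↔ yl - yl ^ δ ≤ lam)) := by
  intro F
  constructor
  · intro x y m hy0 hy1 hfix
    obtain ⟨hlog, hsnd⟩ := (firstReturn_eq_iff x y m).mp hfix
    have hm : (0 : ℝ) < m := by nlinarith [log_neg hy0 hy1, pi_pos]
    refine ⟨by exact_mod_cast hm, ?_, by linarith⟩
    rw [← exp_log hy0, ← hlog, mul_div_cancel_left₀ _ hK.ne']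
  · intro ℓ hℓ yl
    have hℓ' : (0 : ℝ) < ℓ := by exact_mod_cast hℓ
    have hyl1 : yl < 1 :=
      exp_lt_one_iff.mpr <| div_neg_of_neg_of_pos (by nlinarith [pi_pos]) hK
    have hgap := sub_rpow_pos_of_lt_one (exp_pos _) hyl1 hδ
    have hlog : K * log yl = -(2 * π * (ℓ : ℤ)) := by
      rw [log_exp, mul_div_cancel₀ _ hK.ne', Int.cast_natCast]
    refine ⟨hgap, ?_⟩
    calc (∃ x, F (x, yl) = (x + 2 * π * ℓ, yl))
        ↔ ∃ x, lam * sin x = yl - yl ^ δ := exists_congr fun x => by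
          rw [← Int.cast_natCast ℓ]
          refine (firstReturn_eq_iff x yl ℓ).trans ?_
          constructor
          · rintro ⟨-, h⟩; linarith
          · intro h; exact ⟨hlog, by linarith⟩
      _ ↔ yl - yl ^ δ ≤ lam := by
          rw [exists_mul_sin_eq_iff, abs_of_pos hgap, abs_of_pos hlam]
end

section
/- There exists L ∈ ℕ such that for every ℓ ≥ L: λ > y_ℓ − y_ℓ^δ, t_ℓ² − 4d_ℓ > 0, and the numbers μ_s(ℓ) and μ_u(ℓ) are the two (real, distinct) eigenvalues of the 2×2 real matrix M_ℓ = [[1, −K/y_ℓ], [λ·c_ℓ, δ·y_ℓ^{δ−1} − (λK/y_ℓ)·c_ℓ]], where c_ℓ = √(1 − ((y_ℓ − y_ℓ^δ)/λ)²); moreover μ_u(ℓ) < μ_s(ℓ) < 0, with μ_s(ℓ) + μ_u(ℓ) = t_ℓ and μ_s(ℓ)·μ_u(ℓ) = d_ℓ. In addition, μ_s(ℓ) → 0 and μ_u(ℓ) → −∞ as ℓ → ∞. -/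
open Filter Topology Matrix

/-- `y_ℓ = exp(−2πℓ/K)`, the `y`-coordinate of the fixed point `p_ℓ`. -/
noncomputable def yFix (K : ℝ) (ℓ : ℕ) : ℝ :=
  Real.exp (-(2 * Real.pi * (ℓ : ℝ)) / K)

/-- `d_ℓ = δ·exp(−2π(δ−1)ℓ/K)`, the determinant of the derivative at `p_ℓ`. -/
noncomputable def detFix (K δ : ℝ) (ℓ : ℕ) : ℝ :=
  δ * Real.exp (-(2 * Real.pi * (δ - 1) * (ℓ : ℝ)) / K)

/-- `t_ℓ`, the trace of the derivative at `p_ℓ`. -/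
noncomputable def traceFix (K δ lam : ℝ) (ℓ : ℕ) : ℝ :=
  1 + δ * Real.exp (-(2 * Real.pi * (δ - 1) * (ℓ : ℝ)) / K)
    - K * Real.exp (2 * Real.pi * (ℓ : ℝ) / K) *
      Real.sqrt (lam ^ 2 - (yFix K ℓ - yFix K ℓ ^ δ) ^ 2)

/-- `μ_s(ℓ)`, the stable eigenvalue at `p_ℓ`. -/
noncomputable def muS (K δ lam : ℝ) (ℓ : ℕ) : ℝ :=
  (traceFix K δ lam ℓ + Real.sqrt (traceFix K δ lam ℓ ^ 2 - 4 * detFix K δ ℓ)) / 2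

/-- `μ_u(ℓ)`, the unstable eigenvalue at `p_ℓ`. -/
noncomputable def muU (K δ lam : ℝ) (ℓ : ℕ) : ℝ :=
  (traceFix K δ lam ℓ - Real.sqrt (traceFix K δ lam ℓ ^ 2 - 4 * detFix K δ ℓ)) / 2

/-- `c_ℓ = cos x_ℓ`. -/
noncomputable def cosFix (K δ lam : ℝ) (ℓ : ℕ) : ℝ :=
  Real.sqrt (1 - ((yFix K ℓ - yFix K ℓ ^ δ) / lam) ^ 2)

/-- `M_ℓ`, the derivative of the model first-return map at the fixed point `p_ℓ`. -/
noncomputable def derivFix (K δ lam : ℝ) (ℓ : ℕ) : Matrix (Fin 2) (Fin 2) ℝ :=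
  !![1, -K / yFix K ℓ;
     lam * cosFix K δ lam ℓ,
       δ * yFix K ℓ ^ (δ - 1) - (lam * K / yFix K ℓ) * cosFix K δ lam ℓ]


/-! The trace `t_ℓ` tends to `−∞` while the determinant `d_ℓ` tends to `0⁺`, so for large `ℓ` the
characteristic polynomial `μ² − t_ℓ μ + d_ℓ` of `M_ℓ` has two distinct negative roots `μ_s, μ_u`;
then `μ_u ≤ t_ℓ / 2 → −∞` and `μ_s = d_ℓ / μ_u → 0`. -/

theorem Matrix.exists_mulVec_eq_smul_fin_two {R : Type*} [CommRing R]
    (M : Matrix (Fin 2) (Fin 2) R) (hM : M 0 1 ≠ 0) {μ : R}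
    (hμ : μ ^ 2 - M.trace * μ + M.det = 0) :
    ∃ v : Fin 2 → R, v ≠ 0 ∧ M *ᵥ v = μ • v := by
  refine ⟨![M 0 1, μ - M 0 0], fun h => hM (congrFun h 0), ?_⟩
  rw [trace_fin_two, det_fin_two] at hμ
  ext i
  fin_cases i
  · simp [mulVec, dotProduct, Fin.sum_univ_two]
    ring
  · simp [mulVec, dotProduct, Fin.sum_univ_two]
    linear_combination -hμ

theorem sqrt_discrim_lt_neg {t d : ℝ} (ht : t < 0) (hd : 0 < d) :
    √(t ^ 2 - 4 * d) < -t := by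
  rw [Real.sqrt_lt' (by linarith)]
  nlinarith

theorem yFix_pos (K : ℝ) (ℓ : ℕ) : 0 < yFix K ℓ := Real.exp_pos _

theorem yFix_rpow (K p : ℝ) (ℓ : ℕ) :
    yFix K ℓ ^ p = Real.exp (-(2 * Real.pi * p) / K * ℓ) := by
  rw [yFix, ← Real.exp_mul]
  ring_nf

theorem inv_yFix (K : ℝ) (ℓ : ℕ) : (yFix K ℓ)⁻¹ = Real.exp (2 * Real.pi * ℓ / K) := by
  rw [yFix, ← Real.exp_neg]
  ring_nf

theorem detFix_eq (K δ : ℝ) (ℓ : ℕ) : detFix K δ ℓ = δ * yFix K ℓ ^ (δ - 1) := by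
  rw [detFix, yFix_rpow]
  ring_nf

theorem detFix_pos (K : ℝ) {δ : ℝ} (hδ : 0 < δ) (ℓ : ℕ) : 0 < detFix K δ ℓ :=
  mul_pos hδ (Real.exp_pos _)

theorem mul_cosFix (K δ : ℝ) {lam : ℝ} (hlam : 0 < lam) (ℓ : ℕ) :
    lam * cosFix K δ lam ℓ = √(lam ^ 2 - (yFix K ℓ - yFix K ℓ ^ δ) ^ 2) := by
  rw [cosFix, ← Real.sqrt_sq hlam.le, ← Real.sqrt_mul (sq_nonneg lam), Real.sqrt_sq hlam.le]
  congr 1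
  field_simp

theorem derivFix_det (K δ lam : ℝ) (ℓ : ℕ) : (derivFix K δ lam ℓ).det = detFix K δ ℓ := by
  rw [derivFix, det_fin_two_of, detFix_eq]
  ring

theorem derivFix_trace (K δ : ℝ) {lam : ℝ} (hlam : 0 < lam) (ℓ : ℕ) :
    (derivFix K δ lam ℓ).trace = traceFix K δ lam ℓ := by
  rw [derivFix, trace_fin_two_of, traceFix, ← detFix, detFix_eq, ← mul_cosFix K δ hlam,
    ← inv_yFix]
  ring

theorem derivFix_mulVec_eq_smul {K : ℝ} (hK : K ≠ 0) (δ : ℝ) {lam : ℝ} (hlam : 0 < lam)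
    (ℓ : ℕ) {μ : ℝ} (hμ : μ ^ 2 - traceFix K δ lam ℓ * μ + detFix K δ ℓ = 0) :
    ∃ v : Fin 2 → ℝ, v ≠ 0 ∧ derivFix K δ lam ℓ *ᵥ v = μ • v := by
  refine (derivFix K δ lam ℓ).exists_mulVec_eq_smul_fin_two ?_ ?_
  · simpa [derivFix, hK] using (yFix_pos K ℓ).ne'
  · rwa [derivFix_trace K δ hlam, derivFix_det]

theorem tendsto_yFix_rpow {K : ℝ} (hK : 0 < K) {p : ℝ} (hp : 0 < p) :
    Tendsto (fun ℓ : ℕ => yFix K ℓ ^ p) atTop (𝓝 0) := by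
  simp_rw [yFix_rpow]
  refine Real.tendsto_exp_atBot.comp
    (Tendsto.const_mul_atTop_of_neg ?_ tendsto_natCast_atTop_atTop)
  have : 0 < 2 * Real.pi * p := by positivity
  exact div_neg_of_neg_of_pos (by linarith) hK

theorem tendsto_detFix {K δ : ℝ} (hK : 0 < K) (hδ : 1 < δ) :
    Tendsto (detFix K δ) atTop (𝓝 0) := by
  have := (tendsto_yFix_rpow hK (sub_pos.2 hδ)).const_mul δ
  rw [mul_zero] at this
  exact this.congr fun ℓ => (detFix_eq K δ ℓ).symm

theorem tendsto_yFix_sub_rpow {K δ : ℝ} (hK : 0 < K) (hδ : 0 < δ) :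
    Tendsto (fun ℓ : ℕ => yFix K ℓ - yFix K ℓ ^ δ) atTop (𝓝 0) := by
  simpa using (tendsto_yFix_rpow hK one_pos).sub (tendsto_yFix_rpow hK hδ)

theorem tendsto_traceFix {K δ lam : ℝ} (hK : 0 < K) (hδ : 1 < δ) (hlam : 0 < lam) :
    Tendsto (traceFix K δ lam) atTop atBot := by
  have hy := tendsto_yFix_sub_rpow hK (zero_lt_one.trans hδ)
  have hsqrt : Tendsto (fun ℓ : ℕ => √(lam ^ 2 - (yFix K ℓ - yFix K ℓ ^ δ) ^ 2))
      atTop (𝓝 lam) := by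
    convert ((tendsto_const_nhds (x := lam ^ 2)).sub (hy.pow 2)).sqrt using 2
    simp [hlam.le]
  have hexp : Tendsto (fun ℓ : ℕ => K * Real.exp (2 * Real.pi * ℓ / K)) atTop atTop := by
    refine Tendsto.const_mul_atTop hK (Real.tendsto_exp_atTop.comp ?_)
    simp_rw [div_eq_inv_mul _ K, ← mul_assoc]
    exact Tendsto.const_mul_atTop (by positivity) tendsto_natCast_atTop_atTop
  have := ((tendsto_detFix hK hδ).const_add 1).add_atBot
    (tendsto_neg_atTop_atBot.comp (hexp.atTop_mul_pos hlam hsqrt))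
  exact this.congr fun ℓ => by simp [traceFix, detFix, sub_eq_add_neg]

theorem derivFix_eigenvalues {K δ lam : ℝ} (hK : K ≠ 0) (hδ : 0 < δ) (hlam : 0 < lam) {ℓ : ℕ}
    (ht : traceFix K δ lam ℓ < 0)
    (hdisc : 0 < traceFix K δ lam ℓ ^ 2 - 4 * detFix K δ ℓ) :
    (∃ v : Fin 2 → ℝ, v ≠ 0 ∧ derivFix K δ lam ℓ *ᵥ v = muS K δ lam ℓ • v) ∧
    (∃ v : Fin 2 → ℝ, v ≠ 0 ∧ derivFix K δ lam ℓ *ᵥ v = muU K δ lam ℓ • v) ∧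
    muU K δ lam ℓ < muS K δ lam ℓ ∧ muS K δ lam ℓ < 0 ∧
    muS K δ lam ℓ + muU K δ lam ℓ = traceFix K δ lam ℓ ∧
    muS K δ lam ℓ * muU K δ lam ℓ = detFix K δ ℓ := by
  have hsq := Real.sq_sqrt hdisc.le
  have hsqrt_pos := Real.sqrt_pos.2 hdisc
  have hsqrt_lt := sqrt_discrim_lt_neg ht (detFix_pos K hδ ℓ)
  refine ⟨derivFix_mulVec_eq_smul hK δ hlam ℓ ?_,
    derivFix_mulVec_eq_smul hK δ hlam ℓ ?_, ?_, ?_, ?_, ?_⟩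
  · unfold muS; linear_combination hsq / 4
  · unfold muU; linear_combination hsq / 4
  · unfold muS muU; linarith
  · unfold muS; linarith
  · unfold muS muU; ring
  · unfold muS muU; linear_combination -hsq / 4

/-- for all large `ℓ`, `μ_s(ℓ)` and `μ_u(ℓ)` are the two real, distinct,
negative eigenvalues of `M_ℓ`, with the stated trace/determinant relations, and
`μ_s(ℓ) → 0⁻`, `μ_u(ℓ) → −∞`. -/
theorem eigenvalues_derivFix (K δ lam : ℝ) (hK : 0 < K) (hδ : 1 < δ) (hlam : 0 < lam) :
    (∃ L : ℕ, ∀ ℓ ≥ L,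
      yFix K ℓ - yFix K ℓ ^ δ < lam ∧
      0 < traceFix K δ lam ℓ ^ 2 - 4 * detFix K δ ℓ ∧
      (∃ v : Fin 2 → ℝ, v ≠ 0 ∧
        (derivFix K δ lam ℓ).mulVec v = muS K δ lam ℓ • v) ∧
      (∃ v : Fin 2 → ℝ, v ≠ 0 ∧
        (derivFix K δ lam ℓ).mulVec v = muU K δ lam ℓ • v) ∧
      muU K δ lam ℓ < muS K δ lam ℓ ∧ muS K δ lam ℓ < 0 ∧
      muS K δ lam ℓ + muU K δ lam ℓ = traceFix K δ lam ℓ ∧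
      muS K δ lam ℓ * muU K δ lam ℓ = detFix K δ ℓ) ∧
    Tendsto (muS K δ lam) atTop (𝓝 0) ∧
    Tendsto (muU K δ lam) atTop atBot := by
  have hδ₀ : 0 < δ := zero_lt_one.trans hδ
  have ht := tendsto_traceFix hK hδ hlam
  have hd := tendsto_detFix hK hδ
  have hlarge : ∀ᶠ ℓ in atTop, yFix K ℓ - yFix K ℓ ^ δ < lam ∧
      traceFix K δ lam ℓ < 0 ∧ 0 < traceFix K δ lam ℓ ^ 2 - 4 * detFix K δ ℓ := by
    filter_upwards [(tendsto_yFix_sub_rpow hK hδ₀).eventually_lt_const hlam,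
      ht.eventually_le_atBot (-2), hd.eventually_lt_const one_pos] with ℓ hy ht hd
    exact ⟨hy, by linarith, by nlinarith⟩
  obtain ⟨L, hL⟩ := eventually_atTop.1 hlarge
  have hspec : ∀ ℓ ≥ L, _ := fun ℓ hℓ =>
    derivFix_eigenvalues hK.ne' hδ₀ hlam (hL ℓ hℓ).2.1 (hL ℓ hℓ).2.2
  have hU : Tendsto (muU K δ lam) atTop atBot :=
    tendsto_atBot_mono (fun ℓ => div_le_div_of_nonneg_right
      (sub_le_self _ (Real.sqrt_nonneg _)) zero_le_two) (ht.atBot_div_const two_pos)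
  refine ⟨⟨L, fun ℓ hℓ => ⟨(hL ℓ hℓ).1, (hL ℓ hℓ).2.2, hspec ℓ hℓ⟩⟩, ?_, hU⟩
  refine (hd.div_atBot hU).congr' ((eventually_ge_atTop L).mono fun ℓ hℓ => ?_)
  obtain ⟨-, -, hlt, hneg, -, hprod⟩ := hspec ℓ hℓ
  exact (eq_div_of_mul_eq (hlt.trans hneg).ne hprod).symm
end
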